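/- For every v ∈ ℤ⟨a,b⟩, φ_ub(v) = φ(v) − 2·Σ_v φ(v₍₁₎)·b·β(v₍₂₎), where the sum is over the coproduct Δ(v) = Σ_v v₍₁₎ ⊗ v₍₂₎. -/

import Mathlib

open scoped TensorProduct

noncomputable section

namespace CD

/-- ab-words: `false` represents the letter `a`, `true` represents the letter `b`. -/
abbrev Word := List Bool

/-- The free associative ℤ-algebra ℤ⟨a,b⟩ on two noncommuting variables. -/
abbrev ZAB := MonoidAlgebra ℤ (FreeMonoid Bool)

/-- The ab-monomial associated to a word. -/
def mon (w : Word) : ZAB := MonoidAlgebra.single (FreeMonoid.ofList w) 1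

/-- The variable `a`. -/
def genA : ZAB := mon [false]
/-- The variable `b`. -/
def genB : ZAB := mon [true]
/-- `c = a + b`. -/
def genC : ZAB := genA + genB
/-- `d = ab + ba`. -/
def genD : ZAB := genA * genB + genB * genA
/-- `a - b`. -/
def amb : ZAB := genA - genB

/-- Extend a function defined on ab-monomials to a ℤ-linear map on ℤ⟨a,b⟩. -/
def lin (f : Word → ZAB) : ZAB →ₗ[ℤ] ZAB :=
  Finsupp.lift ZAB ℤ (FreeMonoid Bool) (fun w => f (FreeMonoid.toList w)) ∘ₗ
    (MonoidAlgebra.coeffLinearEquiv ℤ).toLinearMap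

/-- κ : κ(aᵐ) = (a-b)ᵐ, and 0 on all other ab-monomials. -/
def kappaW (w : Word) : ZAB :=
  if ∀ x ∈ w, x = false then amb ^ w.length else 0

/-- β : β(bᵐ) = (a-b)ᵐ, and 0 on all other ab-monomials. -/
def betaW (w : Word) : ZAB :=
  if ∀ x ∈ w, x = true then amb ^ w.length else 0

/-- η : η(bᵐaᵏ) = 2·(a-b)^{m+k}, and 0 on all other ab-monomials. -/
def etaW (w : Word) : ZAB :=
  if List.IsChain (· ≥ ·) w then (2 : ℤ) • amb ^ w.length else 0

/-- λ_t : λ_t(bᵐ) = (a-b)ᵐ, λ_t(bᵐa) = (a-b)^{m+1}, and 0 on all other ab-monomials. -/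
def lamTW (w : Word) : ZAB :=
  if List.IsChain (· ≥ ·) w ∧ w.count false ≤ 1 then amb ^ w.length else 0

/-- λ_ub = η - 2·β. -/
def lamUbW (w : Word) : ZAB := etaW w - (2 : ℤ) • betaW w

/-- ω : first replace each occurrence of ab by 2d, then each remaining letter by c. -/
def omegaW : Word → ZAB
  | [] => 1
  | false :: true :: w => ((2 : ℤ) • genD) * omegaW w
  | _ :: w => genC * omegaW w

/-- H′ : removes the last letter of an ab-monomial (`H′(1) = 0`). -/
def HpW (w : Word) : ZAB := if w = [] then 0 else mon w.dropLast

/-- r : r(1) = 0, r(v·a) = v, r(v·b) = 0. -/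
def rW (w : Word) : ZAB := if w.getLast? = some false then mon w.dropLast else 0

/-- The reversal involution on ab-monomials. -/
def revW (w : Word) : ZAB := mon w.reverse

/-- `conv F G (w) = Σ_w F(w₍₁₎)·b·G(w₍₂₎)`, the sum over the coproduct of the word `w`,
i.e. over all ways of removing one letter from `w`, splitting it in two pieces. -/
def conv (F G : Word → ZAB) (w : Word) : ZAB :=
  ∑ i ∈ Finset.range w.length, F (w.take i) * genB * G (w.drop (i + 1))

/-- `tailChain lam j (w) = Σ_w η(w₍₁₎)·b·η(w₍₂₎)·b ⋯ b·η(w₍ⱼ₎)·b·lam(w₍ⱼ₊₁₎)`: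
a chain of `j` η's followed by the map `lam`, summed over the iterated coproduct. -/
def tailChain (lam : Word → ZAB) : ℕ → Word → ZAB
  | 0 => lam
  | j + 1 => conv etaW (tailChain lam j)

/-- φ_k : φ_1 = κ and, for k ≥ 2, `φ_k(v) = Σ_v κ(v₍₁₎)·b·η(v₍₂₎)·b ⋯ b·η(v₍ₖ₎)`,
the sum over the iterated coproduct Δ^{k-1}. -/
def phiK : ℕ → Word → ZAB
  | 0 => fun _ => 0
  | 1 => kappaW
  | k + 2 => conv kappaW (tailChain etaW k)

/-- φ_{t,k} : φ_{t,1} = κ and, for k ≥ 2,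
`φ_{t,k}(v) = Σ_v κ(v₍₁₎)·b·η(v₍₂₎)·b ⋯ b·η(v₍ₖ₋₁₎)·b·λ_t(v₍ₖ₎)`. -/
def phiTK : ℕ → Word → ZAB
  | 0 => fun _ => 0
  | 1 => kappaW
  | k + 2 => conv kappaW (tailChain lamTW k)

/-- φ_{ub,k} : φ_{ub,1} = κ and, for k ≥ 2,
`φ_{ub,k}(v) = Σ_v κ(v₍₁₎)·b·η(v₍₂₎)·b ⋯ b·η(v₍ₖ₋₁₎)·b·λ_ub(v₍ₖ₎)`. -/
def phiUbK : ℕ → Word → ZAB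
  | 0 => fun _ => 0
  | 1 => kappaW
  | k + 2 => conv kappaW (tailChain lamUbW k)

/-- φ = Σ_{k ≥ 1} φ_k (on a word of length ℓ, only terms with k ≤ ℓ + 1 are nonzero). -/
def phiW (w : Word) : ZAB := ∑ k ∈ Finset.range (w.length + 2), phiK k w

/-- φ_t = Σ_{k ≥ 1} φ_{t,k}. -/
def phiTW (w : Word) : ZAB := ∑ k ∈ Finset.range (w.length + 2), phiTK k w

/-- φ_ub = Σ_{k ≥ 1} φ_{ub,k}. -/
def phiUbW (w : Word) : ZAB := ∑ k ∈ Finset.range (w.length + 2), phiUbK k w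

/-- The coproduct Δ on ℤ⟨a,b⟩: Δ(u₁u₂⋯uₙ) = Σᵢ u₁⋯u_{i-1} ⊗ u_{i+1}⋯uₙ. -/
def Delta : ZAB →ₗ[ℤ] (ZAB ⊗[ℤ] ZAB) :=
  Finsupp.lift (ZAB ⊗[ℤ] ZAB) ℤ (FreeMonoid Bool)
    (fun w => ∑ i ∈ Finset.range (FreeMonoid.toList w).length,
      mon ((FreeMonoid.toList w).take i) ⊗ₜ[ℤ] mon ((FreeMonoid.toList w).drop (i + 1))) ∘ₗ
    (MonoidAlgebra.coeffLinearEquiv ℤ).toLinearMap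

/-- For linear maps F, G, the linear map `u ⊗ w ↦ F(u)·b·G(w)`; applying it to Δ(v)
gives the Sweedler sum `Σ_v F(v₍₁₎)·b·G(v₍₂₎)`. -/
def sandwich (F G : ZAB →ₗ[ℤ] ZAB) : (ZAB ⊗[ℤ] ZAB) →ₗ[ℤ] ZAB :=
  TensorProduct.lift
    (((LinearMap.mul ℤ ZAB).comp ((LinearMap.mulRight ℤ genB).comp F)).compl₂ G)

/-!
Write `F ⋆ G` for `conv F G`. The convolution `⋆` is associative and linear in its second
argument, and `φ_{k+2} = κ ⋆ η ⋆ ⋯ ⋆ η`. Since `λ_ub = η - 2β`, linearity in the last factor gives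
`φ_{ub,k+1} = φ_{k+1} - 2 φ_k ⋆ β`, and summing over `k` gives `φ_ub = φ - 2 φ ⋆ β` on words. The
Sweedler sum `Σ_v φ(v₍₁₎)·b·β(v₍₂₎)` is `φ ⋆ β` on words, so the identity extends linearly.
-/

section Conv

variable (F F' G H : Word → ZAB)

@[simp]
theorem conv_nil : conv F G [] = 0 := by
  simp [conv]

theorem conv_cons (x : Bool) (w : Word) :
    conv F G (x :: w) = F [] * genB * G w + conv (fun u => F (x :: u)) G w := by
  simp only [conv, List.length_cons, Finset.sum_range_succ', List.take_zero, List.drop_succ_cons,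
    List.drop_zero, List.take_succ_cons]
  abel

theorem conv_add_left : conv (F + F') G = conv F G + conv F' G := by
  funext w
  simp [conv, add_mul, Finset.sum_add_distrib]

theorem conv_const_mul_left (c : ZAB) : conv (fun u => c * F u) G = fun w => c * conv F G w := by
  funext w
  simp [conv, Finset.mul_sum, mul_assoc]

theorem conv_sub_smul_right (c : ℤ) : conv F (G - c • H) = conv F G - c • conv F H := by
  funext w
  simp only [conv, Pi.sub_apply, Pi.smul_apply, mul_sub, mul_smul_comm, Finset.sum_sub_distrib,
    Finset.smul_sum]

theorem conv_sum_left (s : Finset ℕ) (F : ℕ → Word → ZAB) (w : Word) :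
    conv (fun u => ∑ k ∈ s, F k u) G w = ∑ k ∈ s, conv (F k) G w := by
  simp only [conv, Finset.sum_mul]
  exact Finset.sum_comm

theorem conv_assoc : conv (conv F G) H = conv F (conv G H) := by
  funext w
  induction w generalizing F with
  | nil => simp
  | cons x w ih =>
    have hprefix : (fun u => conv F G (x :: u))
        = (fun u => F [] * genB * G u) + conv (fun u => F (x :: u)) G := by
      funext u
      exact conv_cons F G x u
    rw [conv_cons, conv_cons, conv_nil, hprefix, conv_add_left, conv_const_mul_left, Pi.add_apply,
      ih, zero_mul, zero_mul, zero_add]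

theorem conv_congr_left {w : Word} (h : ∀ u : Word, u.length < w.length → F u = F' u) :
    conv F G w = conv F' G w := by
  refine Finset.sum_congr rfl fun i hi => ?_
  rw [h _ (by simp_all)]

theorem conv_eq_zero_of_length_lt {j : ℕ} (hG : ∀ u : Word, u.length < j → G u = 0) {w : Word}
    (hw : w.length < j + 1) : conv F G w = 0 := by
  refine Finset.sum_eq_zero fun i hi => ?_
  rw [hG _ (by simp at hi ⊢; omega), mul_zero]

end Conv

theorem tailChain_eq_zero_of_length_lt (lam : Word → ZAB) (j : ℕ) (u : Word) (hu : u.length < j) :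
    tailChain lam j u = 0 := by
  induction j generalizing u with
  | zero => omega
  | succ j ih => exact conv_eq_zero_of_length_lt _ _ ih hu

theorem phiK_eq_zero_of_length_lt (k : ℕ) (u : Word) (hu : u.length + 1 < k) : phiK k u = 0 := by
  match k with
  | k + 2 => exact conv_eq_zero_of_length_lt _ _ (tailChain_eq_zero_of_length_lt etaW k) (by omega)

theorem phiW_eq_sum_range {N : ℕ} (w : Word) (hN : w.length + 2 ≤ N) :
    phiW w = ∑ k ∈ Finset.range N, phiK k w := by
  refine Finset.sum_subset (Finset.range_subset_range.mpr hN) fun k _ hk => ?_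
  exact phiK_eq_zero_of_length_lt k w (by simp at hk; omega)

theorem tailChain_sub_smul (G H : Word → ZAB) (c : ℤ) (j : ℕ) :
    tailChain (G - c • H) j = tailChain G j - c • tailChain H j := by
  induction j with
  | zero => rfl
  | succ j ih => simp only [tailChain, ih, conv_sub_smul_right]

theorem conv_tailChain_eta (lam : Word → ZAB) (j : ℕ) :
    conv (tailChain etaW j) lam = tailChain lam (j + 1) := by
  induction j with
  | zero => rfl
  | succ j ih => rw [tailChain, conv_assoc, ih]; rfl

theorem conv_phiK_succ_betaW (k : ℕ) :
    conv (phiK (k + 1)) betaW = conv kappaW (tailChain betaW k) := by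
  cases k with
  | zero => rfl
  | succ k => rw [phiK, conv_assoc, conv_tailChain_eta]

theorem phiUbK_succ (k : ℕ) :
    phiUbK (k + 1) = phiK (k + 1) - (2 : ℤ) • conv (phiK k) betaW := by
  cases k with
  | zero =>
    funext w
    simp [phiUbK, phiK, conv]
  | succ k =>
    rw [conv_phiK_succ_betaW, phiUbK, phiK, ← conv_sub_smul_right, ← tailChain_sub_smul]
    rfl

theorem conv_phiW_betaW (w : Word) :
    conv phiW betaW w = ∑ k ∈ Finset.range (w.length + 1), conv (phiK k) betaW w := by
  rw [← conv_sum_left]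
  exact conv_congr_left _ _ _ fun u hu => phiW_eq_sum_range u (by omega)

theorem phiUbW_eq (w : Word) : phiUbW w = phiW w - (2 : ℤ) • conv phiW betaW w := by
  rw [phiUbW, phiW, conv_phiW_betaW, Finset.sum_range_succ', Finset.sum_range_succ' _ (w.length + 1)]
  simp only [phiUbK_succ, Pi.sub_apply, Pi.smul_apply, Finset.sum_sub_distrib, Finset.smul_sum]
  simp only [phiUbK, phiK, add_zero]

theorem lin_mon (f : Word → ZAB) (w : Word) : lin f (mon w) = f w := by
  simp [lin, mon]

theorem Delta_mon (w : Word) :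
    Delta (mon w) = ∑ i ∈ Finset.range w.length, mon (w.take i) ⊗ₜ[ℤ] mon (w.drop (i + 1)) := by
  simp [Delta, mon]

theorem sandwich_tmul (F G : ZAB →ₗ[ℤ] ZAB) (x y : ZAB) :
    sandwich F G (x ⊗ₜ[ℤ] y) = F x * genB * G y :=
  rfl

theorem sandwich_lin_Delta_mon (f g : Word → ZAB) (w : Word) :
    sandwich (lin f) (lin g) (Delta (mon w)) = conv f g w := by
  simp only [Delta_mon, map_sum, sandwich_tmul, lin_mon, conv]

theorem linearMap_ext_mon {M : Type*} [AddCommGroup M] {F G : ZAB →ₗ[ℤ] M}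
    (h : ∀ w : Word, F (mon w) = G (mon w)) : F = G := by
  refine MonoidAlgebra.lhom_ext' fun x => LinearMap.ext_ring ?_
  simpa [mon] using h (FreeMonoid.toList x)

/-- `φ_ub(v) = φ(v) - 2·Σ_v φ(v₍₁₎)·b·β(v₍₂₎)`. -/
theorem phiUb_functional_equation (v : ZAB) :
    lin phiUbW v = lin phiW v - (2 : ℤ) • sandwich (lin phiW) (lin betaW) (Delta v) := by
  have h : lin phiUbW = lin phiW - (2 : ℤ) • (sandwich (lin phiW) (lin betaW)).comp Delta :=
    linearMap_ext_mon fun w => by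
      simp only [LinearMap.sub_apply, LinearMap.smul_apply, LinearMap.comp_apply, lin_mon,
        sandwich_lin_Delta_mon, phiUbW_eq]
  exact LinearMap.congr_fun h v

end CD

end
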